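/- arXiv:2503.03153 — 2 statements merged into one kernel-verified Lean document; each statement's English description precedes it below -/
import Mathlib

section
/- Characterization of the logical predicate on left-ordered lists: m ⊩^{α↦R} v ∈ [llist α] if and only if there exist n ≥ 0, monoid elements m₁,…,mₙ and values v₁,…,vₙ such that m = m₁·m₂·⋯·mₙ, v = cons(v₁, cons(v₂, …, cons(vₙ, nil())…)), and mᵢ R vᵢ for each i. Dually, m ⊩^{α↦R} v ∈ [rlist α] iff m = mₙ·⋯·m₁ with the same list-shape and relatedness conditions. -/
namespace SubParam

/-- Untyped terms (Curry style), with pairs, unit, and list constructors. -/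
inductive Tm : Type
  | var : String → Tm
  | lam : String → Tm → Tm
  | app : Tm → Tm → Tm
  | pair : Tm → Tm → Tm
  | matchp : Tm → String → String → Tm → Tm
  | unit : Tm
  | nil : Tm
  | cons : Tm → Tm → Tm
  | matchl : Tm → Tm → String → String → Tm → Tm
  deriving DecidableEq

/-- Substitution of a closed value `v` for variable `x` (capture is not an
issue since we only substitute closed terms). -/
def subst (x : String) (v : Tm) : Tm → Tm
  | .var y => if y = x then v else .var y
  | .lam y e => .lam y (if y = x then e else subst x v e)
  | .app e1 e2 => .app (subst x v e1) (subst x v e2)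
  | .pair e1 e2 => .pair (subst x v e1) (subst x v e2)
  | .matchp e y z e' =>
      .matchp (subst x v e) y z (if y = x ∨ z = x then e' else subst x v e')
  | .unit => .unit
  | .nil => .nil
  | .cons e1 e2 => .cons (subst x v e1) (subst x v e2)
  | .matchl e e1 y z e2 =>
      .matchl (subst x v e) (subst x v e1) y z
        (if y = x ∨ z = x then e2 else subst x v e2)

/-- Big-step call-by-value operational semantics. -/
inductive Eval : Tm → Tm → Prop
  | lam (x e) : Eval (.lam x e) (.lam x e)
  | app {e1 e2 x e1' v2 v} :
      Eval e1 (.lam x e1') → Eval e2 v2 → Eval (subst x v2 e1') v →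
      Eval (.app e1 e2) v
  | pair {e1 e2 v1 v2} :
      Eval e1 v1 → Eval e2 v2 → Eval (.pair e1 e2) (.pair v1 v2)
  | matchp {e x y e' v1 v2 v} :
      Eval e (.pair v1 v2) → Eval (subst y v2 (subst x v1 e')) v →
      Eval (.matchp e x y e') v
  | unit : Eval .unit .unit
  | nil : Eval .nil .nil
  | cons {e1 e2 v1 v2} :
      Eval e1 v1 → Eval e2 v2 → Eval (.cons e1 e2) (.cons v1 v2)
  | matchlNil {e e1 x y e2 v} :
      Eval e .nil → Eval e1 v → Eval (.matchl e e1 x y e2) v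
  | matchlCons {e e1 x y e2 v1 v2 v} :
      Eval e (.cons v1 v2) → Eval (subst y v2 (subst x v1 e2)) v →
      Eval (.matchl e e1 x y e2) v

/-- Values. -/
inductive IsVal : Tm → Prop
  | lam (x e) : IsVal (.lam x e)
  | pair {v1 v2} : IsVal v1 → IsVal v2 → IsVal (.pair v1 v2)
  | unit : IsVal .unit
  | nil : IsVal .nil
  | cons {v1 v2} : IsVal v1 → IsVal v2 → IsVal (.cons v1 v2)

/-- Types: type variables (de Bruijn), unit, fuse `A • B`, twist `A ∘ B`,
right implication `A ⇥ B` (over), left implication `A \ B` (under),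
unrestricted functions `A → B`, left/right ordered lists, and `∀`. -/
inductive Ty : Type
  | tvar : ℕ → Ty
  | unit : Ty
  | fuse : Ty → Ty → Ty
  | twist : Ty → Ty → Ty
  | over : Ty → Ty → Ty
  | under : Ty → Ty → Ty
  | arrow : Ty → Ty → Ty
  | llist : Ty → Ty
  | rlist : Ty → Ty
  | all : Ty → Ty
  deriving DecidableEq

/-- Substitute (closed) `B` for type variable `j`. -/
def substTyAt (j : ℕ) (B : Ty) : Ty → Ty
  | .tvar n => if n = j then B else if j < n then .tvar (n - 1) else .tvar n
  | .unit => .unit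
  | .fuse A C => .fuse (substTyAt j B A) (substTyAt j B C)
  | .twist A C => .twist (substTyAt j B A) (substTyAt j B C)
  | .over A C => .over (substTyAt j B A) (substTyAt j B C)
  | .under A C => .under (substTyAt j B A) (substTyAt j B C)
  | .arrow A C => .arrow (substTyAt j B A) (substTyAt j B C)
  | .llist A => .llist (substTyAt j B A)
  | .rlist A => .rlist (substTyAt j B A)
  | .all A => .all (substTyAt (j + 1) B A)

/-- `A[B/α]` for the outermost bound variable. -/
def substTy (A B : Ty) : Ty := substTyAt 0 B A

abbrev Ctx := List (String × Ty)

/-- Typing `Typing ex Δ Γ Ω e A`: `ex` enables the exchange rule (linear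
system), `Δ` counts type variables, `Γ` is the unrestricted context, `Ω` the
ordered context. Without `Γ`-rules being used and with `ex = false` this is
exactly ordered natural deduction. -/
inductive Typing : Bool → ℕ → Ctx → Ctx → Tm → Ty → Prop
  | hyp (ex Δ Γ x A) : Typing ex Δ Γ [(x, A)] (.var x) A
  | uhyp {ex Δ Γ x A} : (x, A) ∈ Γ → Typing ex Δ Γ [] (.var x) A
  | overI {ex Δ Γ Ω x A e B} :
      Typing ex Δ Γ (Ω ++ [(x, A)]) e B → Typing ex Δ Γ Ω (.lam x e) (.over A B)
  | overE {ex Δ Γ Ω ΩA e1 e2 A B} :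
      Typing ex Δ Γ Ω e1 (.over A B) → Typing ex Δ Γ ΩA e2 A →
      Typing ex Δ Γ (Ω ++ ΩA) (.app e1 e2) B
  | underI {ex Δ Γ Ω x A e B} :
      Typing ex Δ Γ ((x, A) :: Ω) e B → Typing ex Δ Γ Ω (.lam x e) (.under A B)
  | underE {ex Δ Γ Ω ΩA e1 e2 A B} :
      Typing ex Δ Γ Ω e1 (.under A B) → Typing ex Δ Γ ΩA e2 A →
      Typing ex Δ Γ (ΩA ++ Ω) (.app e1 e2) B
  | arrowI {ex Δ Γ Ω x A e B} :
      Typing ex Δ ((x, A) :: Γ) Ω e B → Typing ex Δ Γ Ω (.lam x e) (.arrow A B)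
  | arrowE {ex Δ Γ Ω e1 e2 A B} :
      Typing ex Δ Γ Ω e1 (.arrow A B) → Typing ex Δ Γ [] e2 A →
      Typing ex Δ Γ Ω (.app e1 e2) B
  | fuseI {ex Δ Γ ΩA ΩB e1 e2 A B} :
      Typing ex Δ Γ ΩA e1 A → Typing ex Δ Γ ΩB e2 B →
      Typing ex Δ Γ (ΩA ++ ΩB) (.pair e1 e2) (.fuse A B)
  | fuseE {ex Δ Γ Ω ΩL ΩR e x y e' A B C} :
      Typing ex Δ Γ Ω e (.fuse A B) →
      Typing ex Δ Γ (ΩL ++ (x, A) :: (y, B) :: ΩR) e' C →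
      Typing ex Δ Γ (ΩL ++ Ω ++ ΩR) (.matchp e x y e') C
  | twistI {ex Δ Γ ΩA ΩB e1 e2 A B} :
      Typing ex Δ Γ ΩA e1 A → Typing ex Δ Γ ΩB e2 B →
      Typing ex Δ Γ (ΩB ++ ΩA) (.pair e1 e2) (.twist A B)
  | twistE {ex Δ Γ Ω ΩL ΩR e x y e' A B C} :
      Typing ex Δ Γ Ω e (.twist A B) →
      Typing ex Δ Γ (ΩL ++ (y, B) :: (x, A) :: ΩR) e' C →
      Typing ex Δ Γ (ΩL ++ Ω ++ ΩR) (.matchp e x y e') C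
  | unitI (ex Δ Γ) : Typing ex Δ Γ [] .unit .unit
  | lnilI {ex Δ Γ A} : Typing ex Δ Γ [] .nil (.llist A)
  | lconsI {ex Δ Γ ΩA Ω e1 e2 A} :
      Typing ex Δ Γ ΩA e1 A → Typing ex Δ Γ Ω e2 (.llist A) →
      Typing ex Δ Γ (ΩA ++ Ω) (.cons e1 e2) (.llist A)
  | llistE {ex Δ Γ Ω ΩL ΩR e e1 x y e2 A C} :
      Typing ex Δ Γ Ω e (.llist A) →
      Typing ex Δ Γ (ΩL ++ ΩR) e1 C →
      Typing ex Δ Γ (ΩL ++ (x, A) :: (y, .llist A) :: ΩR) e2 C →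
      Typing ex Δ Γ (ΩL ++ Ω ++ ΩR) (.matchl e e1 x y e2) C
  | rnilI {ex Δ Γ A} : Typing ex Δ Γ [] .nil (.rlist A)
  | rconsI {ex Δ Γ ΩA Ω e1 e2 A} :
      Typing ex Δ Γ ΩA e1 A → Typing ex Δ Γ Ω e2 (.rlist A) →
      Typing ex Δ Γ (Ω ++ ΩA) (.cons e1 e2) (.rlist A)
  | rlistE {ex Δ Γ Ω ΩL ΩR e e1 x y e2 A C} :
      Typing ex Δ Γ Ω e (.rlist A) →
      Typing ex Δ Γ (ΩL ++ ΩR) e1 C →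
      Typing ex Δ Γ (ΩL ++ (y, .rlist A) :: (x, A) :: ΩR) e2 C →
      Typing ex Δ Γ (ΩL ++ Ω ++ ΩR) (.matchl e e1 x y e2) C
  | allI {ex Δ Γ Ω e A} :
      Typing ex (Δ + 1) Γ Ω e A → Typing ex Δ Γ Ω e (.all A)
  | allE {ex Δ Γ Ω e A} (B : Ty) :
      Typing ex Δ Γ Ω e (.all A) → Typing ex Δ Γ Ω e (substTy A B)
  | exch {Δ Γ ΩL ΩR p q e C} :
      Typing true Δ Γ (ΩL ++ p :: q :: ΩR) e C →
      Typing true Δ Γ (ΩL ++ q :: p :: ΩR) e C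

section LogPred

variable {M : Type} [Monoid M]

/-- Unrolled logical predicate for left lists `llist α = ⊕{nil:1, cons:α • llist α}`. -/
inductive LListP (P : M → Tm → Prop) : M → Tm → Prop
  | nil : LListP P 1 .nil
  | cons {m1 v1 m2 v2} :
      P m1 v1 → LListP P m2 v2 → LListP P (m1 * m2) (.cons v1 v2)

/-- Unrolled logical predicate for right lists `rlist α = ⊕{nil:1, cons:α ∘ rlist α}`. -/
inductive RListP (P : M → Tm → Prop) : M → Tm → Prop
  | nil : RListP P 1 .nil
  | cons {m1 v1 m2 v2} :
      P m1 v1 → RListP P m2 v2 → RListP P (m2 * m1) (.cons v1 v2)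

/-- The monoid-parameterized logical predicate on values, `m ⊩^S v ∈ [A]`. -/
def VPred : Ty → (ℕ → M → Tm → Prop) → M → Tm → Prop
  | .tvar n, S, m, v => S n m v
  | .unit, _, m, v => m = 1 ∧ v = .unit
  | .fuse A B, S, m, v => ∃ m1 m2 v1 v2, m = m1 * m2 ∧ v = .pair v1 v2 ∧
      VPred A S m1 v1 ∧ VPred B S m2 v2
  | .twist A B, S, m, v => ∃ m1 m2 v1 v2, m = m2 * m1 ∧ v = .pair v1 v2 ∧
      VPred A S m1 v1 ∧ VPred B S m2 v2
  | .over A B, S, m, v => ∀ k w, VPred A S k w →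
      ∃ u, Eval (.app v w) u ∧ VPred B S (m * k) u
  | .under A B, S, m, v => ∀ k w, VPred A S k w →
      ∃ u, Eval (.app v w) u ∧ VPred B S (k * m) u
  | .arrow A B, S, m, v => ∀ w, VPred A S 1 w →
      ∃ u, Eval (.app v w) u ∧ VPred B S m u
  | .llist A, S, m, v => LListP (VPred A S) m v
  | .rlist A, S, m, v => RListP (VPred A S) m v
  | .all A, S, m, v => ∀ R : M → Tm → Prop,
      VPred A (fun n => Nat.casesOn n R S) m v

/-- The logical predicate on expressions, `m ⊩^S e ∈ ⟦A⟧`. -/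
def EPred (A : Ty) (S : ℕ → M → Tm → Prop) (m : M) (e : Tm) : Prop :=
  ∃ v, Eval e v ∧ VPred A S m v

/-- The empty assignment of relations to type variables. -/
def S0 : ℕ → M → Tm → Prop := fun _ _ _ => False

/-- `m ⊩^S η ∈ [Ω]` : closing value substitutions matching an ordered context. -/
inductive SubOk (S : ℕ → M → Tm → Prop) : M → List (String × Tm) → Ctx → Prop
  | nil : SubOk S 1 [] []
  | cons {m m' x v A η Ω} :
      VPred A S m v → SubOk S m' η Ω →
      SubOk S (m * m') ((x, v) :: η) ((x, A) :: Ω)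

end LogPred

/-- Apply a closing substitution. -/
def applySub (η : List (String × Tm)) (e : Tm) : Tm :=
  η.foldr (fun p acc => subst p.1 p.2 acc) e

/-- `[v₁, …, vₙ]` as a term. -/
def listTm : List Tm → Tm
  | [] => .nil
  | v :: vs => .cons v (listTm vs)

/-- `g(v₁, g(v₂, …, g(vₙ, b)…))` as a term. -/
def foldTm (g : Tm) (vs : List Tm) (b : Tm) : Tm :=
  vs.foldr (fun v acc => .app g (.pair v acc)) b

end SubParam

namespace SubParam

section ListPredicates

variable {M : Type} [Monoid M] {P : M → Tm → Prop}

theorem LListP.of_forall₂ {ms : List M} {vs : List Tm} (h : List.Forall₂ P ms vs) :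
    LListP P ms.prod (listTm vs) := by
  induction h with
  | nil => exact LListP.nil
  | cons hmv _ ih => exact LListP.cons hmv ih

theorem RListP.of_forall₂ {ms : List M} {vs : List Tm} (h : List.Forall₂ P ms vs) :
    RListP P ms.reverse.prod (listTm vs) := by
  induction h with
  | nil => exact RListP.nil
  | cons hmv _ ih =>
    rw [List.reverse_cons, List.prod_append, List.prod_singleton]
    exact RListP.cons hmv ih

theorem LListP.exists_forall₂ {m : M} {v : Tm} (h : LListP P m v) :
    ∃ ms vs, m = ms.prod ∧ v = listTm vs ∧ List.Forall₂ P ms vs := by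
  induction h with
  | nil => exact ⟨[], [], rfl, rfl, .nil⟩
  | cons hmv _ ih =>
    obtain ⟨ms, vs, rfl, rfl, hall⟩ := ih
    exact ⟨_ :: ms, _ :: vs, List.prod_cons.symm, rfl, .cons hmv hall⟩

theorem RListP.exists_forall₂ {m : M} {v : Tm} (h : RListP P m v) :
    ∃ ms vs, m = ms.reverse.prod ∧ v = listTm vs ∧ List.Forall₂ P ms vs := by
  induction h with
  | nil => exact ⟨[], [], rfl, rfl, .nil⟩
  | cons hmv _ ih =>
    obtain ⟨ms, vs, rfl, rfl, hall⟩ := ih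
    refine ⟨_ :: ms, _ :: vs, ?_, rfl, .cons hmv hall⟩
    simp only [List.reverse_cons, List.prod_append, List.prod_singleton]

theorem lListP_iff_exists_forall₂ {m : M} {v : Tm} :
    LListP P m v ↔ ∃ ms vs, m = ms.prod ∧ v = listTm vs ∧ List.Forall₂ P ms vs :=
  ⟨LListP.exists_forall₂, fun ⟨_, _, hm, hv, hall⟩ => hm ▸ hv ▸ LListP.of_forall₂ hall⟩

theorem rListP_iff_exists_forall₂ {m : M} {v : Tm} :
    RListP P m v ↔ ∃ ms vs, m = ms.reverse.prod ∧ v = listTm vs ∧ List.Forall₂ P ms vs :=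
  ⟨RListP.exists_forall₂, fun ⟨_, _, hm, hv, hall⟩ => hm ▸ hv ▸ RListP.of_forall₂ hall⟩

end ListPredicates

/-- characterization of the logical predicate on left- and
right-ordered lists: `m ⊩^{α↦R} v ∈ [llist α]` iff `m = m₁⋯mₙ`,
`v = [v₁,…,vₙ]` with `mᵢ R vᵢ`; for `rlist α` the product is reversed. -/
theorem stmt_13 {M : Type} [Monoid M] (R : M → Tm → Prop) :
    (∀ (m : M) (v : Tm),
      VPred (.llist (.tvar 0)) (fun _ => R) m v ↔
        ∃ (ms : List M) (vs : List Tm),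
          m = ms.prod ∧ v = listTm vs ∧ List.Forall₂ R ms vs)
  ∧ (∀ (m : M) (v : Tm),
      VPred (.rlist (.tvar 0)) (fun _ => R) m v ↔
        ∃ (ms : List M) (vs : List Tm),
          m = ms.reverse.prod ∧ v = listTm vs ∧ List.Forall₂ R ms vs) :=
  ⟨fun _ _ => lListP_iff_exists_forall₂, fun _ _ => rListP_iff_exists_forall₂⟩

end SubParam
end

section
/- Key step in the fold free theorem: with R_A relating aᵢ to vᵢ and R_B relating a_{i₁}⋯a_{i_k} to the value of g(v_{i₁}, …, g(v_{i_k}, b)), if g satisfies (for all m₁, m₂, v, d: m₁ R_A v and m₂ R_B d imply m₁·m₂ R_B (value of g(v,d))) and ε R_B b, then for any m ⊩^{α↦R_A} [v₁,…,vₙ] ∈ [llist α] with m = a₁⋯aₙ, the element a₁⋯aₙ is R_B-related to the nested application g(v₁, g(v₂, …, g(vₙ, b))). -/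
/-! Induction on the derivation of `m ⊩ [v₁, …, vₙ] ∈ [llist α]`: every `cons` cell is one
use of the combining property of `g`, starting from `ε R_B b`. -/

theorem FreeMonoid.eq_nil_of_prod_map_of_eq_one {α : Type*} {l : List α}
    (h : (l.map FreeMonoid.of).prod = 1) : l = [] :=
  List.eq_nil_iff_forall_not_mem.mpr (by simpa using congrArg FreeMonoid.toList h)

namespace SubParam

theorem Eval.eval_self {e v : Tm} (h : Eval e v) : Eval v v := by
  induction h with
  | lam => exact Eval.lam _ _
  | app _ _ _ _ _ ih => exact ih
  | pair _ _ ih1 ih2 => exact Eval.pair ih1 ih2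
  | matchp _ _ _ ih => exact ih
  | unit => exact Eval.unit
  | nil => exact Eval.nil
  | cons _ _ ih1 ih2 => exact Eval.cons ih1 ih2
  | matchlNil _ _ _ ih => exact ih
  | matchlCons _ _ _ ih => exact ih

theorem Eval.deterministic {e v w : Tm} (h : Eval e v) (h' : Eval e w) : v = w := by
  induction h generalizing w with
  | lam => cases h'; rfl
  | app _ _ _ ih1 ih2 ih3 =>
    cases h' with
    | app ha hb hc => cases ih1 ha; cases ih2 hb; exact ih3 hc
  | pair _ _ ih1 ih2 =>
    cases h' with
    | pair ha hb => rw [ih1 ha, ih2 hb]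
  | matchp _ _ ih1 ih2 =>
    cases h' with
    | matchp ha hb => cases ih1 ha; exact ih2 hb
  | unit => cases h'; rfl
  | nil => cases h'; rfl
  | cons _ _ ih1 ih2 =>
    cases h' with
    | cons ha hb => rw [ih1 ha, ih2 hb]
  | matchlNil _ _ ih1 ih2 =>
    cases h' with
    | matchlNil ha hb => exact ih2 hb
    | matchlCons ha hb => cases ih1 ha
  | matchlCons _ _ ih1 ih2 =>
    cases h' with
    | matchlNil ha hb => cases ih1 ha
    | matchlCons ha hb => cases ih1 ha; exact ih2 hb

theorem Eval.app_pair_of_eval {g v e u w : Tm} (he : Eval e u)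
    (h : Eval (.app g (.pair v u)) w) : Eval (.app g (.pair v e)) w := by
  cases h with | app hg hvu hbody =>
  cases hvu with | pair hv hu =>
  cases hu.deterministic he.eval_self
  exact Eval.app hg (Eval.pair hv he) hbody

theorem LListP.exists_eval_foldTm {M : Type} [Monoid M] {RA RB : M → Tm → Prop} {g b : Tm}
    (hg : ∀ m1 m2 v d, RA m1 v → RB m2 d →
      ∃ u, Eval (.app g (.pair v d)) u ∧ RB (m1 * m2) u)
    (hb : RB 1 b) (hbb : Eval b b) :
    ∀ {vs : List Tm} {m : M}, LListP RA m (listTm vs) →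
      ∃ u, Eval (foldTm g vs b) u ∧ RB m u
  | [], _, .nil => ⟨b, hbb, hb⟩
  | _ :: _, _, .cons hv hvs => by
    obtain ⟨d, hd, hRBd⟩ := exists_eval_foldTm hg hb hbb hvs
    obtain ⟨u, hu, hRBu⟩ := hg _ _ _ _ hv hRBd
    exact ⟨u, hd.app_pair_of_eval hu, hRBu⟩

theorem stmt_17_general (g b : Tm) (vf : ℕ → Tm)
    (RA RB : FreeMonoid ℕ → Tm → Prop)
    (hRB : ∀ m d, RB m d ↔ ∃ is : List ℕ,
      m = (is.map FreeMonoid.of).prod ∧ Eval (foldTm g (is.map vf) b) d)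
    (hg : ∀ (m1 m2 : FreeMonoid ℕ) (v d : Tm), RA m1 v → RB m2 d →
      ∃ u, Eval (.app g (.pair v d)) u ∧ RB (m1 * m2) u)
    (hb : RB 1 b) :
    ∀ n : ℕ,
      LListP RA (((List.range n).map FreeMonoid.of).prod)
        (listTm ((List.range n).map vf)) →
      ∃ u, Eval (foldTm g ((List.range n).map vf) b) u ∧
        RB (((List.range n).map FreeMonoid.of).prod) u := by
  -- `ε` is the image of the empty word only, so `hRB` says that `b` evaluates to itself.
  obtain ⟨is, his, hbb⟩ := (hRB 1 b).mp hb
  cases FreeMonoid.eq_nil_of_prod_map_of_eq_one his.symm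
  exact fun n h => h.exists_eval_foldTm hg hb hbb

/-- key step in the fold free theorem. With `R_A` relating `aᵢ` to
`vᵢ` and `R_B` relating `a_{i₁}⋯a_{i_k}` to the value of
`g(v_{i₁}, …, g(v_{i_k}, b))`, if `g` combines (`m₁ R_A v` and `m₂ R_B d` imply
`m₁·m₂ R_B (value of g(v,d))`) and `ε R_B b`, then whenever
`a₁⋯aₙ ⊩^{α↦R_A} [v₁,…,vₙ] ∈ [llist α]`, the element `a₁⋯aₙ` is `R_B`-related
to the value of the nested application `g(v₁, g(v₂, …, g(vₙ, b)))`. -/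
theorem stmt_17 (g b : Tm) (vf : ℕ → Tm)
    (RA RB : FreeMonoid ℕ → Tm → Prop)
    (hRA : ∀ m v, RA m v ↔ ∃ i, m = FreeMonoid.of i ∧ v = vf i)
    (hRB : ∀ m d, RB m d ↔ ∃ is : List ℕ,
      m = (is.map FreeMonoid.of).prod ∧ Eval (foldTm g (is.map vf) b) d)
    (hg : ∀ (m1 m2 : FreeMonoid ℕ) (v d : Tm), RA m1 v → RB m2 d →
      ∃ u, Eval (.app g (.pair v d)) u ∧ RB (m1 * m2) u)
    (hb : RB 1 b) :
    ∀ n : ℕ,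
      LListP RA (((List.range n).map FreeMonoid.of).prod)
        (listTm ((List.range n).map vf)) →
      ∃ u, Eval (foldTm g ((List.range n).map vf) b) u ∧
        RB (((List.range n).map FreeMonoid.of).prod) u :=
  stmt_17_general g b vf RA RB hRB hg hb

end SubParam
end
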